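/- If an edge e is a follower of anchor x (i.e., t^{x}(e) > t(e)), then t(e) ≥ t(x) is not required; however, if e and x do not lie in a common triangle, then there exists a sequence of triangles Δ_1,…,Δ_j in G with x ∈ Δ_1, e ∈ Δ_j, and consecutive triangles sharing an edge (i.e., e is triangle-connected to x). -/

import Mathlib

/-!
Take a subgraph `H` realising the anchored trussness `k = t^A(e)` and keep only the edges of `H`
that are triangle-connected to `e` inside `H`. This edge set is closed under completing
triangles of `H`, so every kept edge has the same support as in `H`. If no anchor were
triangle-connected to `e`, no kept edge would be an anchor, so all of them would have support
`≥ k - 2`: an ordinary `k`-truss witness for `e`, contradicting `t(e) < k`.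
-/

variable {V : Type*}

/-- Support of an (unordered) edge in graph `H`: number of common neighbors. -/
noncomputable def esupp [Fintype V] (H : SimpleGraph V) : Sym2 V → ℕ :=
  Sym2.lift ⟨fun u v => Nat.card {w : V // H.Adj u w ∧ H.Adj v w},
    fun _ _ => Nat.card_congr (Equiv.subtypeEquivRight fun _ => and_comm)⟩

/-- `H` is a subgraph of `G` in which every edge has support at least `k-2`. -/
def IsTrussSub [Fintype V] (G H : SimpleGraph V) (k : ℕ) : Prop :=
  H ≤ G ∧ ∀ e ∈ H.edgeSet, k - 2 ≤ esupp H e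

/-- Trussness of an edge: the largest `k` such that some subgraph witnessing
the `k`-truss support condition contains it. -/
noncomputable def etruss [Fintype V] (G : SimpleGraph V) (e : Sym2 V) : ℕ :=
  sSup {k | ∃ H, IsTrussSub G H k ∧ e ∈ H.edgeSet}

/-- The `k`-truss of `G`: the maximal subgraph in which every edge has support `≥ k-2`. -/
noncomputable def trussG [Fintype V] (G : SimpleGraph V) (k : ℕ) : SimpleGraph V :=
  sSup {H | IsTrussSub G H k}

/-- Anchored truss-subgraph: edges in the anchor set `A` are exempt from the
support constraint. -/
def IsATrussSub [Fintype V] (G H : SimpleGraph V) (A : Set (Sym2 V)) (k : ℕ) : Prop :=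
  H ≤ G ∧ ∀ e ∈ H.edgeSet, e ∈ A ∨ k - 2 ≤ esupp H e

/-- Anchored trussness `t^A(e)`. -/
noncomputable def atruss [Fintype V] (G : SimpleGraph V) (A : Set (Sym2 V)) (e : Sym2 V) : ℕ :=
  sSup {k | ∃ H, IsATrussSub G H A k ∧ e ∈ H.edgeSet}

/-- The anchored `k`-truss of `G` with anchor set `A`. -/
noncomputable def atrussGraph [Fintype V] (G : SimpleGraph V) (A : Set (Sym2 V)) (k : ℕ) :
    SimpleGraph V :=
  sSup {H | IsATrussSub G H A k}

/-- Trussness gain: total increment of trussness over all non-anchor edges. -/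
noncomputable def TG [Fintype V] (G : SimpleGraph V) (A : Set (Sym2 V)) : ℕ :=
  ∑ e ∈ (G.edgeSet \ A).toFinite.toFinset, (atruss G A e - etruss G e)

/-- `a b c` form a triangle in `G`. -/
def IsTri (G : SimpleGraph V) (a b c : V) : Prop := G.Adj a b ∧ G.Adj b c ∧ G.Adj a c

/-- The three edges of the triangle on `a b c`. -/
def triE (a b c : V) : Set (Sym2 V) := {s(a, b), s(b, c), s(a, c)}

/-- Two edges lie in a common triangle of `G`. -/
def ShareTri (G : SimpleGraph V) (e f : Sym2 V) : Prop :=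
  ∃ a b c, IsTri G a b c ∧ e ∈ triE a b c ∧ f ∈ triE a b c

/-- Triangle connectivity: chain of triangles, consecutive ones sharing an edge. -/
def TriConn (G : SimpleGraph V) : Sym2 V → Sym2 V → Prop := Relation.TransGen (ShareTri G)

/-- A `k`-truss component: a truss-subgraph whose edges are pairwise
triangle-connected within it, maximal with these properties. -/
def IsTrussComponent [Fintype V] (G S : SimpleGraph V) (k : ℕ) : Prop :=
  IsTrussSub G S k ∧
  (∀ e ∈ S.edgeSet, ∀ f ∈ S.edgeSet, e = f ∨ TriConn S e f) ∧
  ∀ S', IsTrussSub G S' k →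
    (∀ e ∈ S'.edgeSet, ∀ f ∈ S'.edgeSet, e = f ∨ TriConn S' e f) → S ≤ S' → S' = S

lemma esupp_mk [Fintype V] (H : SimpleGraph V) (u v : V) :
    esupp H s(u, v) = Nat.card {w : V // H.Adj u w ∧ H.Adj v w} := rfl

lemma esupp_le_card [Fintype V] (H : SimpleGraph V) (f : Sym2 V) :
    esupp H f ≤ Fintype.card V := by
  induction f using Sym2.inductionOn with
  | hf u v =>
    classical
    rw [esupp_mk, Nat.card_eq_fintype_card]
    exact Fintype.card_subtype_le _

lemma ShareTri.mono {G H : SimpleGraph V} (h : H ≤ G) {e f : Sym2 V} (hef : ShareTri H e f) :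
    ShareTri G e f := by
  obtain ⟨a, b, c, ⟨hab, hbc, hac⟩, he, hf⟩ := hef
  exact ⟨a, b, c, ⟨h hab, h hbc, h hac⟩, he, hf⟩

lemma ShareTri.symm {G : SimpleGraph V} {e f : Sym2 V} (hef : ShareTri G e f) :
    ShareTri G f e := by
  obtain ⟨a, b, c, ht, he, hf⟩ := hef
  exact ⟨a, b, c, ht, hf, he⟩

lemma TriConn.mono {G H : SimpleGraph V} (h : H ≤ G) {e f : Sym2 V} (hef : TriConn H e f) :
    TriConn G e f :=
  Relation.TransGen.mono (fun _ _ => ShareTri.mono h) e f hef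

lemma TriConn.symm {G : SimpleGraph V} {e f : Sym2 V} (hef : TriConn G e f) : TriConn G f e :=
  Relation.transGen_swap.mp (Relation.TransGen.mono (fun _ _ => ShareTri.symm) e f hef)

lemma le_etruss_of_isTrussSub [Fintype V] {G H : SimpleGraph V} {k : ℕ} {e : Sym2 V}
    (hH : IsTrussSub G H k) (he : e ∈ H.edgeSet) : k ≤ etruss G e := by
  refine le_csSup ⟨Fintype.card V + 2, ?_⟩ ⟨H, hH, he⟩
  rintro j ⟨H', ⟨-, hsupp⟩, heH'⟩
  have := hsupp e heH'
  have := esupp_le_card H' e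
  omega

lemma exists_isATrussSub_atruss [Fintype V] {G : SimpleGraph V} {A : Set (Sym2 V)}
    {e : Sym2 V} (heA : e ∉ A) (hpos : 0 < atruss G A e) :
    ∃ H, IsATrussSub G H A (atruss G A e) ∧ e ∈ H.edgeSet := by
  have hbdd : BddAbove {k | ∃ H, IsATrussSub G H A k ∧ e ∈ H.edgeSet} := by
    refine ⟨Fintype.card V + 2, ?_⟩
    rintro k ⟨H, ⟨-, hsupp⟩, heH⟩
    have := (hsupp e heH).resolve_left heA
    have := esupp_le_card H e
    omega
  have hne : {k | ∃ H, IsATrussSub G H A k ∧ e ∈ H.edgeSet}.Nonempty := by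
    by_contra hempty
    rw [Set.not_nonempty_iff_eq_empty] at hempty
    rw [atruss, hempty, csSup_empty] at hpos
    exact hpos.false
  exact Nat.sSup_mem hne hbdd

def triComponent (H : SimpleGraph V) (e : Sym2 V) : Set (Sym2 V) :=
  {f | f ∈ H.edgeSet ∧ Relation.ReflTransGen (ShareTri H) e f}

lemma mem_triComponent_of_adj {H : SimpleGraph V} {e : Sym2 V} {u v w : V}
    (huv : s(u, v) ∈ triComponent H e) (huw : H.Adj u w) (hvw : H.Adj v w) :
    s(u, w) ∈ triComponent H e := by
  have hshare : ShareTri H s(u, v) s(u, w) :=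
    ⟨u, v, w, ⟨huv.1, hvw, huw⟩, by simp [triE], by simp [triE]⟩
  exact ⟨huw, huv.2.tail hshare⟩

lemma esupp_fromEdgeSet_triComponent [Fintype V] (H : SimpleGraph V) {e f : Sym2 V}
    (hf : f ∈ triComponent H e) :
    esupp (SimpleGraph.fromEdgeSet (triComponent H e)) f = esupp H f := by
  have hadj : ∀ {u v w}, s(u, v) ∈ triComponent H e → H.Adj u w → H.Adj v w →
      (SimpleGraph.fromEdgeSet (triComponent H e)).Adj u w := fun huv huw hvw =>
    SimpleGraph.fromEdgeSet_adj _ |>.mpr ⟨mem_triComponent_of_adj huv huw hvw, huw.ne⟩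
  induction f using Sym2.inductionOn with
  | hf u v =>
    have hvu : s(v, u) ∈ triComponent H e := Sym2.eq_swap ▸ hf
    refine Nat.card_congr (Equiv.subtypeEquivRight fun w => ⟨?_, ?_⟩)
    · rintro ⟨huw, hvw⟩
      exact ⟨((SimpleGraph.fromEdgeSet_adj _).mp huw).1.1,
        ((SimpleGraph.fromEdgeSet_adj _).mp hvw).1.1⟩
    · rintro ⟨huw, hvw⟩
      exact ⟨hadj hf huw hvw, hadj hvu hvw huw⟩

lemma IsATrussSub.isTrussSub_triComponent [Fintype V] {G H : SimpleGraph V}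
    {A : Set (Sym2 V)} {k : ℕ} (hH : IsATrussSub G H A k) {e : Sym2 V}
    (hA : Disjoint A (triComponent H e)) :
    IsTrussSub G (SimpleGraph.fromEdgeSet (triComponent H e)) k := by
  refine ⟨(SimpleGraph.fromEdgeSet_mono fun f hf => hf.1).trans
    ((SimpleGraph.fromEdgeSet_edgeSet H).le.trans hH.1), fun f hf => ?_⟩
  rw [SimpleGraph.edgeSet_fromEdgeSet] at hf
  rw [esupp_fromEdgeSet_triComponent H hf.1]
  exact (hH.2 f hf.1.1).resolve_left fun hfA => hA.ne_of_mem hfA hf.1 rfl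

theorem exists_triConn_of_etruss_lt_atruss [Fintype V] {G : SimpleGraph V}
    {A : Set (Sym2 V)} {e : Sym2 V} (heA : e ∉ A) (hlt : etruss G e < atruss G A e) :
    ∃ a ∈ A, TriConn G a e := by
  obtain ⟨H, hH, heH⟩ := exists_isATrussSub_atruss heA (Nat.zero_lt_of_lt hlt)
  by_contra! hnone
  have hA : Disjoint A (triComponent H e) := by
    refine Set.disjoint_left.mpr fun a haA ha => ?_
    rcases Relation.reflTransGen_iff_eq_or_transGen.mp ha.2 with rfl | hconn
    · exact heA haA
    · exact hnone a haA (TriConn.mono hH.1 hconn).symm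
  have heC : e ∈ triComponent H e := ⟨heH, .refl⟩
  have := le_etruss_of_isTrussSub (hH.isTrussSub_triComponent hA)
    (by rw [SimpleGraph.edgeSet_fromEdgeSet]; exact ⟨heC, H.not_isDiag_of_mem_edgeSet heH⟩)
  omega

theorem stmt7_general [Fintype V] (G : SimpleGraph V) (x e : Sym2 V)
    (hne : e ≠ x)
    (hf : etruss G e < atruss G {x} e) :
    TriConn G x e := by
  obtain ⟨a, rfl, ha⟩ := exists_triConn_of_etruss_lt_atruss (Set.notMem_singleton_iff.mpr hne) hf
  exact ha

theorem stmt7 [Fintype V] (G : SimpleGraph V) (x e : Sym2 V)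
    (hx : x ∈ G.edgeSet) (he : e ∈ G.edgeSet) (hne : e ≠ x)
    (hf : etruss G e < atruss G {x} e) (hnc : ¬ ShareTri G x e) :
    TriConn G x e :=
  stmt7_general G x e hne hf
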